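/- Let X be a subshift over a finite alphabet Λ, let ξ ∈ Ω_X with stem x = σ(ξ), and let α, β ∈ 𝔽₊ be such that αβ⁻¹ is in reduced form, α is a prefix of x, and, writing x = αy, the infinite word y lies in F_α ∩ F_β. If moreover y lies in the interior of F_β relative to X, then αβ⁻¹ ∈ ξ. -/
import Mathlib


open scoped Classical

namespace SubshiftPaper

variable {Λ : Type}

/-- The left shift on infinite words. -/
def shiftMap (x : ℕ → Λ) : ℕ → Λ := fun n => x (n + 1)

/-- Concatenation of a finite word with an infinite word. -/
def cat (α : List Λ) (y : ℕ → Λ) : ℕ → Λ := fun n => α.getD n (y (n - α.length))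

/-- `α` is a prefix of the infinite word `x`. -/
def Pref (α : List Λ) (x : ℕ → Λ) : Prop := ∀ (i : ℕ) (h : i < α.length), x i = α[i]

/-- The tail of `x` after `n` letters. -/
def tail (x : ℕ → Λ) (n : ℕ) : ℕ → Λ := fun i => x (n + i)

/-- `α` occurs in `x` at position `n`. -/
def OccursAt (α : List Λ) (x : ℕ → Λ) (n : ℕ) : Prop :=
  ∀ (i : ℕ) (h : i < α.length), x (n + i) = α[i]

/-- `α` occurs in `x` (as a contiguous block of letters). -/
def Occurs (α : List Λ) (x : ℕ → Λ) : Prop := ∃ n, OccursAt α x n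

/-- `X` is a subshift: a nonempty closed shift-invariant subset. -/
def IsSubshift [TopologicalSpace Λ] (X : Set (ℕ → Λ)) : Prop :=
  X.Nonempty ∧ IsClosed X ∧ ∀ x ∈ X, shiftMap x ∈ X

/-- The set of infinite words avoiding all words in `F`. -/
def ForbidSpace (F : Set (List Λ)) : Set (ℕ → Λ) := {x | ∀ α ∈ F, ¬ Occurs α x}

/-- `X` is a subshift of finite type. -/
def IsSFT (X : Set (ℕ → Λ)) : Prop := ∃ F : Set (List Λ), F.Finite ∧ X = ForbidSpace F

/-- The follower set of a finite word. -/
def follower (X : Set (ℕ → Λ)) (α : List Λ) : Set (ℕ → Λ) := {y | y ∈ X ∧ cat α y ∈ X}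

/-- The cylinder of a finite word. -/
def cylinder (X : Set (ℕ → Λ)) (α : List Λ) : Set (ℕ → Λ) := {x | x ∈ X ∧ Pref α x}

/-- The language of `X`. -/
def Language (X : Set (ℕ → Λ)) : Set (List Λ) := {α | ∃ x ∈ X, Occurs α x}

/-- The embedding of finite words into the free group. -/
def wd (α : List Λ) : FreeGroup Λ := (α.map FreeGroup.of).prod

/-- Indicator function of a set of group elements. -/
noncomputable def chi (s : Set (FreeGroup Λ)) : FreeGroup Λ → Bool :=
  fun g => if g ∈ s then true else false

/-- The set `ξ_x ⊆ 𝔽`. -/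
def xiSet [DecidableEq Λ] (X : Set (ℕ → Λ)) (x : ℕ → Λ) : Set (FreeGroup Λ) :=
  {g | ∃ α β : List Λ, g = wd α * (wd β)⁻¹ ∧
        FreeGroup.norm g = α.length + β.length ∧
        Pref α x ∧ tail x α.length ∈ follower X α ∩ follower X β}

/-- `ξ_x` as an element of `2^𝔽`. -/
noncomputable def xiB [DecidableEq Λ] (X : Set (ℕ → Λ)) (x : ℕ → Λ) : FreeGroup Λ → Bool :=
  chi (xiSet X x)

/-- The spectrum `Ω_X`: the closure of `{ξ_x : x ∈ X}` in `2^𝔽`. -/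
noncomputable def Omega [DecidableEq Λ] (X : Set (ℕ → Λ)) : Set (FreeGroup Λ → Bool) :=
  closure ((fun x => xiB X x) '' X)

/-- Left translation of an element of `2^𝔽`. -/
def translate (g : FreeGroup Λ) (ξ : FreeGroup Λ → Bool) : FreeGroup Λ → Bool :=
  fun h => ξ (g⁻¹ * h)

/-- `x` is the stem of `ξ`: `ξ ∩ 𝔽₊` is exactly the set of prefixes of `x`. -/
def IsStem (ξ : FreeGroup Λ → Bool) (x : ℕ → Λ) : Prop :=
  {g | ξ g = true} ∩ {g | ∃ α : List Λ, g = wd α} =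
    {g | ∃ α : List Λ, g = wd α ∧ Pref α x}

/-- `x` is the stem of `ξ` at `g`: `ξ ∩ g𝔽₊ = {gα : α is a prefix of x}`. -/
def IsStemAt (ξ : FreeGroup Λ → Bool) (g : FreeGroup Λ) (x : ℕ → Λ) : Prop :=
  {h | ξ h = true} ∩ {h | ∃ α : List Λ, h = g * wd α} =
    {h | ∃ α : List Λ, h = g * wd α ∧ Pref α x}

/-- The orbit of `ξ` under the spectral partial action. -/
def Orbit (ξ : FreeGroup Λ → Bool) : Set (FreeGroup Λ → Bool) :=
  {η | ∃ g : FreeGroup Λ, ξ g⁻¹ = true ∧ η = translate g ξ}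

/-- Topological freeness of the spectral partial action. -/
noncomputable def TopFree [DecidableEq Λ] (X : Set (ℕ → Λ)) : Prop :=
  ∀ g : FreeGroup Λ, g ≠ 1 →
    ∀ U : Set (FreeGroup Λ → Bool), IsOpen U →
      (U ∩ Omega X ⊆ {ξ | ξ g⁻¹ = true ∧ translate g ξ = ξ}) → U ∩ Omega X = ∅

/-- The periodic infinite word `γ^∞`. -/
noncomputable def perInf [Nonempty Λ] (γ : List Λ) : ℕ → Λ :=
  fun n => γ.getD (n % γ.length) (Classical.arbitrary Λ)

/-- `n`-fold concatenation of a finite word with itself. -/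
def rep : ℕ → List Λ → List Λ
  | 0, _ => []
  | n + 1, γ => γ ++ rep n γ

/-- `γ` is a circuit relative to `X`. -/
noncomputable def IsCircuit [Nonempty Λ] (X : Set (ℕ → Λ)) (γ : List Λ) : Prop :=
  γ ≠ [] ∧ perInf γ ∈ X

/-- `y` is an exit for the circuit `γ`. -/
noncomputable def IsExit [Nonempty Λ] (X : Set (ℕ → Λ)) (γ : List Λ) (y : ℕ → Λ) : Prop :=
  y ≠ perInf γ ∧ cat γ y ∈ X

/-- `z` is a strong exit for the circuit `γ`. -/
noncomputable def IsStrongExit [Nonempty Λ] (X : Set (ℕ → Λ)) (γ : List Λ) (z : ℕ → Λ) : Prop :=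
  z ≠ perInf γ ∧ ∀ n : ℕ, cat (rep n γ) z ∈ X

/-- The sets `X_g` of the standard partial action. -/
def Xg [DecidableEq Λ] (X : Set (ℕ → Λ)) (g : FreeGroup Λ) : Set (ℕ → Λ) :=
  {x | ∃ α β : List Λ, g = wd α * (wd β)⁻¹ ∧
        FreeGroup.norm g = α.length + β.length ∧
        ∃ y ∈ follower X α ∩ follower X β, x = cat α y}

/-- `x` is a fixed point for `θ_g`. -/
def IsThetaFixed [DecidableEq Λ] (X : Set (ℕ → Λ)) (g : FreeGroup Λ) (x : ℕ → Λ) : Prop :=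
  ∃ α β : List Λ, g = wd α * (wd β)⁻¹ ∧
    FreeGroup.norm g = α.length + β.length ∧
    ∃ y ∈ follower X α ∩ follower X β, x = cat β y ∧ cat α y = x

/-- `x` may be collectively reached from the finite set `B`. -/
def CollReached (X : Set (ℕ → Λ)) (B : Finset (List Λ)) (x : ℕ → Λ) : Prop :=
  ∃ α γ : List Λ, Pref α x ∧ ∀ β ∈ B, cat (β ++ γ) (tail x α.length) ∈ X

/-- `X` is collectively cofinal. -/
def CollCofinal (X : Set (ℕ → Λ)) : Prop :=
  ∀ B : Finset (List Λ), ↑B ⊆ Language X → (⋂ β ∈ B, follower X β).Nonempty →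
    ∀ x ∈ X, CollReached X B x

/-- `X` is strongly cofinal. -/
def StrongCofinal (X : Set (ℕ → Λ)) : Prop :=
  ∀ β ∈ Language X, ∃ M : ℕ, ∀ x ∈ X, ∃ α γ : List Λ, Pref α x ∧
    cat (β ++ γ) (tail x α.length) ∈ X ∧ α.length + γ.length ≤ M

/-- The even shift. -/
def evenShift : Set (ℕ → Fin 2) :=
  ForbidSpace {w | ∃ n : ℕ, w = 0 :: (List.replicate (2 * n + 1) 1 ++ [0])}


variable {Λ : Type}

lemma wd_eq_mk [DecidableEq Λ] (γ : List Λ) :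
    wd γ = FreeGroup.mk (γ.map (fun a => (a, true))) := by
  induction γ with
  | nil => simp [wd, FreeGroup.one_eq_mk]
  | cons a γ ih =>
      simp only [wd, List.map_cons, List.prod_cons] at *
      rw [ih, show (FreeGroup.of a : FreeGroup Λ) = FreeGroup.mk [(a, true)] from rfl,
        FreeGroup.mul_mk]
      rfl

lemma reduce_map_true [DecidableEq Λ] (γ : List Λ) :
    FreeGroup.reduce (γ.map (fun a => (a, true))) = γ.map (fun a => (a, true)) := by
  induction γ with
  | nil => simp
  | cons a γ ih =>
      rw [List.map_cons, FreeGroup.reduce.cons, ih]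
      cases γ with
      | nil => simp
      | cons b γ => simp

lemma toWord_wd [DecidableEq Λ] (γ : List Λ) :
    (wd γ).toWord = γ.map (fun a => (a, true)) := by
  rw [wd_eq_mk, FreeGroup.toWord_mk, reduce_map_true]

/-- Uniqueness: if a positive word equals a reduced-form `α'β'⁻¹`, then `β' = []`, `α' = γ`. -/
lemma pos_word_unique [DecidableEq Λ] (γ α' β' : List Λ)
    (h : wd γ = wd α' * (wd β')⁻¹)
    (hn : FreeGroup.norm (wd (Λ := Λ) γ) = α'.length + β'.length) :
    α' = γ ∧ β' = [] := by
  classical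
  set L : List (Λ × Bool) :=
    (α'.map (fun a => (a, true))) ++ FreeGroup.invRev (β'.map (fun a => (a, true))) with hL
  have hmk : FreeGroup.mk L = wd γ := by
    rw [h, wd_eq_mk α', wd_eq_mk β', FreeGroup.inv_mk, FreeGroup.mul_mk]
  have hlen : L.length = α'.length + β'.length := by
    simp [hL, FreeGroup.invRev_length]
  have hred : FreeGroup.reduce L = L := by
    have h1 : FreeGroup.Red L (FreeGroup.reduce L) := FreeGroup.reduce.red
    have h2 : (FreeGroup.reduce L).length = L.length := by
      have : (FreeGroup.reduce L).length = FreeGroup.norm (wd (Λ := Λ) γ) := by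
        rw [← hmk, FreeGroup.norm, FreeGroup.toWord_mk]
      omega
    exact (h1.sublist.eq_of_length h2)
  have hLw : γ.map (fun a => (a, true)) = L := by
    rw [← toWord_wd, ← hmk, FreeGroup.toWord_mk, hred]
  -- all letters in LHS have snd = true; invRev part has snd = false
  have hβ : β' = [] := by
    by_contra hne
    rcases List.exists_cons_of_ne_nil hne with ⟨b, β'', rfl⟩
    have hmem : (b, false) ∈ L := by
      apply List.mem_append_right
      simp [FreeGroup.invRev]
    rw [← hLw] at hmem
    simp at hmem
  subst hβ
  have : γ.map (fun a => (a, true)) = α'.map (fun a => (a, true)) := by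
    simpa [hL, FreeGroup.invRev] using hLw
  have := List.map_injective_iff.2 (fun a b hab => by
    simpa using congrArg Prod.fst hab) this
  exact ⟨this.symm, rfl⟩

lemma tail_mem_of_mem [TopologicalSpace Λ] {X : Set (ℕ → Λ)} (hX : IsSubshift X)
    {x : ℕ → Λ} (hx : x ∈ X) (n : ℕ) : tail x n ∈ X := by
  induction n with
  | zero =>
      have h0 : tail x 0 = x := funext fun i => by simp [tail]
      rwa [h0]
  | succ n ih =>
      have : tail x (n + 1) = shiftMap (tail x n) := by
        funext i; simp [tail, shiftMap]; ring_nf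
      rw [this]; exact hX.2.2 _ ih

lemma cat_tail {x : ℕ → Λ} {γ : List Λ} (h : Pref γ x) : cat γ (tail x γ.length) = x := by
  funext n
  by_cases hn : n < γ.length
  · rw [cat, List.getD_eq_getElem _ _ hn]; exact (h n hn).symm
  · rw [cat, List.getD_eq_default _ _ (le_of_not_gt hn)]
    simp [tail]; congr 1; omega

lemma chi_eq_true {s : Set (FreeGroup Λ)} {g : FreeGroup Λ} : chi s g = true ↔ g ∈ s := by
  simp [chi]

lemma exists_agree_of_isOpen [TopologicalSpace Λ] {U : Set (ℕ → Λ)} (hU : IsOpen U)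
    {z : ℕ → Λ} (hz : z ∈ U) :
    ∃ m : ℕ, ∀ w : ℕ → Λ, (∀ i < m, w i = z i) → w ∈ U := by
  obtain ⟨I, u, hu, hsub⟩ := isOpen_pi_iff.1 hU z hz
  refine ⟨(I.sup id) + 1, fun w hw => hsub fun i hi => ?_⟩
  have h1 : i ≤ I.sup id := Finset.le_sup (f := id) hi
  rw [hw i (by omega)]
  exact (hu i hi).2

theorem aux_mem_of_interior {Λ : Type} [Fintype Λ] [Nonempty Λ] [DecidableEq Λ]
    [TopologicalSpace Λ] [DiscreteTopology Λ]
    (X : Set (ℕ → Λ)) (hX : IsSubshift X)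
    (ξ : FreeGroup Λ → Bool) (hξ : ξ ∈ Omega X)
    (x : ℕ → Λ) (hx : IsStem ξ x)
    (α β : List Λ)
    (hred : FreeGroup.norm (wd α * (wd β)⁻¹) = α.length + β.length)
    (hpref : Pref α x)
    (hy : tail x α.length ∈ follower X α ∩ follower X β)
    (hint : ∃ U : Set (ℕ → Λ), IsOpen U ∧ tail x α.length ∈ U ∧ U ∩ X ⊆ follower X β) :
    ξ (wd α * (wd β)⁻¹) = true := by
  classical
  obtain ⟨U, hUopen, hzU, hUX⟩ := hint
  obtain ⟨m, hm⟩ := exists_agree_of_isOpen hUopen hzU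
  set g : FreeGroup Λ := wd α * (wd β)⁻¹ with hg
  set N : ℕ := α.length + m with hN
  set γN : List Λ := List.ofFn (fun i : Fin N => x i) with hγN
  have hγlen : γN.length = N := by simp [hγN]
  have hPrefγ : Pref γN x := by
    intro i hi
    simp [hγN]
  have hξγ : ξ (wd γN) = true := by
    have : wd γN ∈ ({g | ξ g = true} ∩ {g | ∃ α : List Λ, g = wd α}) :=
      (Set.ext_iff.1 hx (wd γN)).2 ⟨γN, rfl, hPrefγ⟩
    exact this.1
  -- find x' ∈ X approximating ξ
  have hVopen : IsOpen {η : FreeGroup Λ → Bool | η g = ξ g ∧ η (wd γN) = ξ (wd γN)} := by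
    have h1 : IsOpen {η : FreeGroup Λ → Bool | η g = ξ g} := by
      have he : {η : FreeGroup Λ → Bool | η g = ξ g}
          = (fun η : FreeGroup Λ → Bool => η g) ⁻¹' ({ξ g} : Set Bool) := rfl
      rw [he]
      exact (continuous_apply g).isOpen_preimage _ (isOpen_discrete _)
    have h2 : IsOpen {η : FreeGroup Λ → Bool | η (wd γN) = ξ (wd γN)} := by
      have he : {η : FreeGroup Λ → Bool | η (wd γN) = ξ (wd γN)}
          = (fun η : FreeGroup Λ → Bool => η (wd γN)) ⁻¹' ({ξ (wd γN)} : Set Bool) := rfl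
      rw [he]
      exact (continuous_apply (wd γN)).isOpen_preimage _ (isOpen_discrete _)
    exact h1.inter h2
  obtain ⟨η, hηV, hηS⟩ := mem_closure_iff.1 hξ _ hVopen ⟨rfl, rfl⟩
  obtain ⟨x', hx'X, rfl⟩ := hηS
  -- x' starts with γN
  have hxiγ : wd γN ∈ xiSet X x' := by
    rw [← chi_eq_true (s := xiSet X x')]
    show xiB X x' (wd γN) = true
    rw [show xiB X x' (wd γN) = ξ (wd γN) from hηV.2, hξγ]
  obtain ⟨α', β', heq, hn, hpref', _⟩ := hxiγ
  obtain ⟨hα'γ, hβ'⟩ := pos_word_unique γN α' β' heq hn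
  subst hα'γ
  have hagree : ∀ i < N, x' i = x i := by
    intro i hi
    have := hpref' i (by omega)
    rw [this]
    simp [hγN]
  have hprefα' : Pref α x' := by
    intro i hi
    rw [hagree i (by omega)]
    exact hpref i hi
  have htailX : tail x' α.length ∈ X := tail_mem_of_mem hX hx'X α.length
  have htailU : tail x' α.length ∈ U := by
    apply hm
    intro i hi
    show x' (α.length + i) = x (α.length + i)
    exact hagree _ (by omega)
  have hfolβ : tail x' α.length ∈ follower X β := hUX ⟨htailU, htailX⟩
  have hfolα : tail x' α.length ∈ follower X α :=
    ⟨htailX, by rw [cat_tail hprefα']; exact hx'X⟩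
  have : g ∈ xiSet X x' := ⟨α, β, rfl, hred, hprefα', hfolα, hfolβ⟩
  rw [← show xiB X x' g = ξ g from hηV.1]
  show chi (xiSet X x') g = true
  rw [chi_eq_true]
  exact this

/-- interior criterion for membership in `ξ`. -/
theorem mem_of_interior_follower {Λ : Type} [Fintype Λ] [Nonempty Λ] [DecidableEq Λ]
    [TopologicalSpace Λ] [DiscreteTopology Λ]
    (X : Set (ℕ → Λ)) (hX : IsSubshift X)
    (ξ : FreeGroup Λ → Bool) (hξ : ξ ∈ Omega X)
    (x : ℕ → Λ) (hx : IsStem ξ x)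
    (α β : List Λ)
    (hred : FreeGroup.norm (wd α * (wd β)⁻¹) = α.length + β.length)
    (hpref : Pref α x)
    (hy : tail x α.length ∈ follower X α ∩ follower X β)
    (hint : ∃ U : Set (ℕ → Λ), IsOpen U ∧ tail x α.length ∈ U ∧ U ∩ X ⊆ follower X β) :
    ξ (wd α * (wd β)⁻¹) = true :=
  aux_mem_of_interior X hX ξ hξ x hx α β hred hpref hy hint

end SubshiftPaper
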